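/- arXiv:2201.08030 — 4 statements merged into one kernel-verified Lean document; each statement's English description precedes it below -/
import Mathlib

section
/- Let R be a commutative ring, E ∈ R[T] a polynomial with formal derivative E', u, X ∈ R, and n ≥ 1 a natural number. Then E(u − E(u)·X)^n ≡ E(u)^n·(1 − E'(u)·X)^n modulo the ideal (E(u)^{n+1}). -/
/-- `E(u − E(u)·X)^n ≡ E(u)^n·(1 − E'(u)·X)^n  (mod (E(u)^{n+1}))` for `n ≥ 1`. -/
theorem stmt9 {R : Type*} [CommRing R] (E : Polynomial R) (u X : R) (n : ℕ) (hn : 1 ≤ n) :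
    Polynomial.eval (u - Polynomial.eval u E * X) E ^ n -
        Polynomial.eval u E ^ n *
          (1 - Polynomial.eval u (Polynomial.derivative E) * X) ^ n ∈
      Ideal.span {Polynomial.eval u E ^ (n + 1)} := by
  set e := Polynomial.eval u E with he
  obtain ⟨k, hk⟩ := E.binomExpansion u (-(e * X))
  rw [Ideal.mem_span_singleton]
  have h1 : Polynomial.eval (u - e * X) E
      = e * ((1 - Polynomial.eval u (Polynomial.derivative E) * X) + k * (X ^ 2 * e)) := by
    rw [show u - e * X = u + -(e * X) by ring, hk]
    ring
  obtain ⟨z, hz⟩ := sub_dvd_pow_sub_pow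
    ((1 - Polynomial.eval u (Polynomial.derivative E) * X) + k * (X ^ 2 * e))
    (1 - Polynomial.eval u (Polynomial.derivative E) * X) n
  refine ⟨k * X ^ 2 * z, ?_⟩
  rw [h1, mul_pow, pow_succ]
  linear_combination e ^ n * hz
end

section
/- Let A be a commutative ℚ-algebra and a, b ∈ A. Define the formal power series f = ∑_{k≥0} (∏_{i=0}^{k−1}(b + i·a))·X^k/k! ∈ A[[X]]. Then (1 − a·X)·f' = b·f, where f' denotes the formal derivative of f. -/
open Finset

namespace PowerSeries

variable {A : Type*} [CommRing A]

theorem one_sub_C_mul_X_mul_derivative_eq_C_mul {a b : A} {f : A⟦X⟧}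
    (hf : ∀ n : ℕ, (n + 1 : A) * coeff (n + 1) f = (b + n * a) * coeff n f) :
    (1 - C a * X) * derivative A f = C b * f := by
  ext n
  rw [sub_mul, one_mul, map_sub, mul_assoc, coeff_C_mul, coeff_C_mul, coeff_derivative,
    mul_comm _ (n + 1 : A), hf]
  rcases n with _ | n
  · simp
  · rw [coeff_succ_X_mul, coeff_derivative, Nat.cast_succ]
    ring

end PowerSeries

theorem natCast_succ_mul_inv_factorial_succ_smul {A : Type*} [CommRing A] [Algebra ℚ A]
    (n : ℕ) (x : A) :
    (n + 1 : A) * (((n + 1).factorial : ℚ)⁻¹ • x) = ((n.factorial : ℚ)⁻¹ • x) := by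
  have hcast : (n + 1 : A) = algebraMap ℚ A (n + 1) := by simp
  rw [hcast, ← Algebra.smul_def, smul_smul, Nat.factorial_succ, Nat.cast_mul, Nat.cast_succ,
    mul_inv, ← mul_assoc, mul_inv_cancel₀ (by positivity), one_mul]

theorem succ_mul_inv_factorial_smul_prod_range_succ {A : Type*} [CommRing A] [Algebra ℚ A]
    (a b : A) (n : ℕ) :
    (n + 1 : A) * (((n + 1).factorial : ℚ)⁻¹ • ∏ i ∈ range (n + 1), (b + i * a))
      = (b + n * a) * ((n.factorial : ℚ)⁻¹ • ∏ i ∈ range n, (b + i * a)) := by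
  rw [natCast_succ_mul_inv_factorial_succ_smul, prod_range_succ, mul_smul_comm, mul_comm]

/-- The formal power series `f = ∑_k (∏_{i<k}(b + i·a))·X^k/k!` satisfies the
differential equation `(1 − a·X)·f' = b·f`. -/
theorem stmt11 {A : Type*} [CommRing A] [Algebra ℚ A] (a b : A) :
    (1 - PowerSeries.C a * PowerSeries.X) *
        (PowerSeries.derivative A
          (PowerSeries.mk fun k =>
            ((k.factorial : ℚ)⁻¹) • ∏ i ∈ Finset.range k, (b + (i : A) * a)))
      = PowerSeries.C b *
        PowerSeries.mk (fun k =>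
          ((k.factorial : ℚ)⁻¹) • ∏ i ∈ Finset.range k, (b + (i : A) * a)) :=
  PowerSeries.one_sub_C_mul_X_mul_derivative_eq_C_mul fun n => by
    simpa only [PowerSeries.coeff_mk] using succ_mul_inv_factorial_smul_prod_range_succ a b n
end

section
/- Let F be a field of characteristic zero, V a finite-dimensional F-vector space, and φ, θ ∈ End_F(V) with φθ − θφ = −a·θ for some a ∈ F. Define the formal power series F_φ(X) := ∑_{k≥0} (∏_{i=0}^{k−1}(φ + i·a·id))·X^k/k! ∈ End_F(V)[[X]] (and F_{φ+a·id}(X) by the same formula with φ replaced by φ + a·id). Then F_{φ+a·id}(X) ∘ θ = θ ∘ F_φ(X) as formal power series with coefficients in End_F(V). -/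
/-- The formal power series `F_φ(X) = ∑_k (∏_{i<k}(φ + i·a·id))·X^k/k!` with
coefficients in `End_F(V)`. -/
noncomputable def Fser {F V : Type*} [Field F] [AddCommGroup V] [Module F V]
    (a : F) (φ : Module.End F V) : PowerSeries (Module.End F V) :=
  PowerSeries.mk fun k => ((k.factorial : F)⁻¹) •
    ((List.range k).map fun i : ℕ => φ + ((i : F) * a) • (1 : Module.End F V)).prod

/-- If `φθ − θφ = −a·θ`, then `F_{φ+a·id}(X) ∘ θ = θ ∘ F_φ(X)` as formal power
series with coefficients in `End_F(V)`. -/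
theorem stmt13 {F V : Type*} [Field F] [CharZero F] [AddCommGroup V] [Module F V]
    [FiniteDimensional F V] (φ θ : Module.End F V) (a : F)
    (h : φ * θ - θ * φ = -(a • θ)) :
    Fser a (φ + a • (1 : Module.End F V)) * PowerSeries.C (R := Module.End F V) θ
      = PowerSeries.C (R := Module.End F V) θ * Fser a φ := by
  have hφθ : φ * θ = θ * φ - a • θ := by rw [sub_eq_iff_eq_add] at h; rw [h]; abel
  have key : ∀ k : ℕ,
      ((List.range k).map fun i : ℕ =>
        (φ + a • (1 : Module.End F V)) + ((i : F) * a) • (1 : Module.End F V)).prod * θ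
      = θ * ((List.range k).map fun i : ℕ =>
        φ + ((i : F) * a) • (1 : Module.End F V)).prod := by
    intro k
    induction k with
    | zero => simp
    | succ n ih =>
      rw [List.range_succ, List.map_append, List.map_append, List.prod_append,
        List.prod_append]
      simp only [List.map_cons, List.map_nil, List.prod_cons, List.prod_nil, mul_one]
      have step : ((φ + a • (1 : Module.End F V)) + ((n : F) * a) • (1 : Module.End F V)) * θ
          = θ * (φ + ((n : F) * a) • (1 : Module.End F V)) := by
        simp only [add_mul, mul_add, smul_mul_assoc, mul_smul_comm, one_mul, mul_one, hφθ]
        abel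
      rw [mul_assoc, step, ← mul_assoc, ih, mul_assoc]
  ext k
  simp only [PowerSeries.coeff_mul_C, PowerSeries.coeff_C_mul, Fser, PowerSeries.coeff_mk,
    smul_mul_assoc, mul_smul_comm, key k]
end

section
/- Let R be a commutative ℚ-algebra, H an R-module, and θ_1, …, θ_d ∈ End_R(H) pairwise commuting nilpotent endomorphisms. Consider the R[Y_1,…,Y_d]-module H[Y] := H ⊗_R R[Y_1,…,Y_d], whose general element is uniquely written as ∑_{n∈ℕ^d} h_n·Y^{[n]} with Y^{[n]} = ∏ Y_i^{n_i}/n_i! and h_n ∈ H almost all zero. For 1 ≤ i ≤ d define Θ_i : H[Y] → H[Y] by Θ_i(∑ h_n Y^{[n]}) = ∑ (θ_i(h_n) − h_{n+1_i})·Y^{[n]}. Then the intersection of the kernels ∩_{i=1}^d ker(Θ_i) equals { ∑_{n∈ℕ^d} (∏_i θ_i^{n_i})(h)·Y^{[n]} : h ∈ H }, and the map h ↦ ∑_n (∏θ_i^{n_i})(h)Y^{[n]} is an R-module isomorphism from H onto this kernel. -/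
/-- The ordered composition `∏_i θ_i^{n_i}` of commuting endomorphisms. -/
noncomputable def thetaPowProd {R H : Type*} [CommRing R] [AddCommGroup H] [Module R H]
    {d : ℕ} (θ : Fin d → Module.End R H) (n : Fin d → ℕ) : Module.End R H :=
  (List.ofFn fun i => θ i ^ n i).prod

/-- The `i`-th component `Θ_i` of the Higgs field on
`H[Y] = H ⊗_R R[Y_1,…,Y_d]`, modeled as finitely supported functions
`(Fin d → ℕ) →₀ H` (the coefficients of the divided powers `Y^{[n]}`):
`Θ_i(∑ h_n Y^{[n]}) = ∑ (θ_i(h_n) − h_{n+1_i}) Y^{[n]}`. -/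
noncomputable def higgsComp {R H : Type*} [CommRing R] [AddCommGroup H] [Module R H]
    {d : ℕ} (θ : Fin d → Module.End R H) (i : Fin d) :
    ((Fin d → ℕ) →₀ H) →ₗ[R] ((Fin d → ℕ) →₀ H) :=
  Finsupp.mapRange.linearMap (θ i) -
    Finsupp.lcomapDomain (fun n : Fin d → ℕ => n + fun j => if j = i then 1 else 0)
      (add_left_injective _)

section aux
variable {R H : Type*} [CommRing R] [AddCommGroup H] [Module R H]

lemma higgs_apply {d : ℕ} (θ : Fin d → Module.End R H) (i : Fin d)
    (x : (Fin d → ℕ) →₀ H) (n : Fin d → ℕ) :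
    (higgsComp θ i x) n = θ i (x n) - x (n + fun j => if j = i then 1 else 0) := by
  simp [higgsComp, Finsupp.sub_apply, Finsupp.lcomapDomain, Finsupp.comapDomain_apply]

lemma thetaPowProd_zero {d : ℕ} (θ : Fin d → Module.End R H) :
    thetaPowProd θ (fun _ => 0) = 1 := by
  simp [thetaPowProd]

lemma thetaPowProd_cons {d : ℕ} (θ : Fin (d+1) → Module.End R H) (n : Fin (d+1) → ℕ) :
    thetaPowProd θ n = θ 0 ^ n 0 * thetaPowProd (θ ∘ Fin.succ) (n ∘ Fin.succ) := by
  simp [thetaPowProd, List.ofFn_succ]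

lemma thetaPowProd_succ {d : ℕ} (θ : Fin d → Module.End R H)
    (hcomm : ∀ i j, Commute (θ i) (θ j)) (i : Fin d) (n : Fin d → ℕ) :
    thetaPowProd θ (n + fun j => if j = i then 1 else 0) = θ i * thetaPowProd θ n := by
  induction d with
  | zero => exact i.elim0
  | succ d ih =>
    rw [thetaPowProd_cons, thetaPowProd_cons θ n]
    rcases Fin.eq_zero_or_eq_succ i with h0 | ⟨j, rfl⟩
    · subst h0
      have h1 : ((n + fun j => if j = (0:Fin (d+1)) then 1 else 0) ∘ Fin.succ) = n ∘ Fin.succ := by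
        funext k; simp [Fin.succ_ne_zero]
      rw [h1]
      simp [Pi.add_apply, pow_succ', mul_assoc]
    · have h0 : ((n + fun k => if k = Fin.succ j then 1 else 0) : Fin (d+1) → ℕ) 0 = n 0 := by
        simp [(Fin.succ_ne_zero j).symm]
      have h1 : (((n + fun k => if k = Fin.succ j then 1 else 0) : Fin (d+1) → ℕ) ∘ Fin.succ)
          = (n ∘ Fin.succ) + fun k => if k = j then 1 else 0 := by
        funext k; simp [Fin.succ_inj]
      rw [h0, h1, ih (θ ∘ Fin.succ) (fun a b => hcomm _ _) j]
      have hc : Commute (θ 0 ^ n 0) (θ (Fin.succ j)) := (hcomm _ _).pow_left _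
      show θ 0 ^ n 0 * (θ (Fin.succ j) * _) = θ (Fin.succ j) * (θ 0 ^ n 0 * _)
      rw [← mul_assoc, hc.eq, mul_assoc]

end aux


/-- For pairwise commuting nilpotent `θ_1, …, θ_d`, the common kernel
`∩_i ker(Θ_i)` in `H[Y]` consists exactly of the elements
`∑_n (∏_i θ_i^{n_i})(h)·Y^{[n]}` for `h ∈ H`, and `h` is uniquely determined,
so that `h ↦ ∑_n (∏θ_i^{n_i})(h)Y^{[n]}` is an `R`-module isomorphism of `H`
onto the kernel. -/
theorem stmt14 {R H : Type*} [CommRing R] [Algebra ℚ R] [AddCommGroup H] [Module R H]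
    {d : ℕ} (θ : Fin d → Module.End R H)
    (hcomm : ∀ i j, Commute (θ i) (θ j))
    (hnil : ∀ i, IsNilpotent (θ i)) :
    (∀ x : (Fin d → ℕ) →₀ H,
        (∀ i : Fin d, higgsComp θ i x = 0) ↔
          ∃ h : H, ∀ n : Fin d → ℕ, x n = thetaPowProd θ n h) ∧
      ∀ h h' : H,
        (∀ n : Fin d → ℕ, thetaPowProd θ n h = thetaPowProd θ n h') → h = h' := by
  constructor
  · intro x
    constructor
    · intro hk
      have step : ∀ (i : Fin d) (n : Fin d → ℕ),
          x (n + fun j => if j = i then 1 else 0) = θ i (x n) := by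
        intro i n
        have := congrArg (fun y => y n) (hk i)
        simp only [higgs_apply, Finsupp.coe_zero, Pi.zero_apply] at this
        exact (sub_eq_zero.mp this).symm
      refine ⟨x (fun _ => 0), ?_⟩
      have key : ∀ N (n : Fin d → ℕ), (∑ j, n j) = N →
          x n = thetaPowProd θ n (x fun _ => 0) := by
        intro N
        induction N with
        | zero =>
          intro n hn
          have : n = fun _ => 0 := by
            funext j
            exact (Finset.sum_eq_zero_iff.mp hn) j (Finset.mem_univ j)
          subst this
          simp [thetaPowProd_zero]
        | succ N ihN =>
          intro n hn
          have hex : ∃ i, n i ≠ 0 := by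
            by_contra hc
            push_neg at hc
            simp [hc] at hn
          obtain ⟨i, hi⟩ := hex
          set m : Fin d → ℕ := Function.update n i (n i - 1) with hm
          have hni : n i = m i + 1 := by
            simp [hm, Function.update_self]
            omega
          have hmn : n = m + fun j => if j = i then 1 else 0 := by
            funext j
            by_cases hj : j = i
            · subst hj; simpa using hni
            · simp [hm, Function.update_of_ne hj, hj]
          have hsum : (∑ j, m j) = N := by
            have h1 : (∑ j, n j) = (∑ j, m j) + 1 := by
              rw [hmn]
              simp [Finset.sum_add_distrib]
            omega
          rw [hmn, step i m, ihN m hsum, thetaPowProd_succ θ hcomm i m]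
          rfl
      intro n
      exact key (∑ j, n j) n rfl
    · rintro ⟨h, hh⟩ i
      ext n
      rw [higgs_apply, hh, hh, thetaPowProd_succ θ hcomm i n]
      simp
  · intro h h' hhh
    have h1 := hhh (fun _ => 0)
    rw [thetaPowProd_zero] at h1
    simpa using h1
end
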